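/- arXiv:1810.01368 — 2 statements merged into one kernel-verified Lean document; each statement's English description precedes it below -/
import Mathlib

section
/- Let Q(x) = (σ(x) − |x₃|)² + x₃² with σ(x) = √(x₁² + x₂²). For every x ∈ ℝ³ with σ(x) = 0 (i.e. x₁ = x₂ = 0), the function Q is Hadamard directionally differentiable at x with Q'(x; h) = 4x₃h₃ − 2|x₃|√(h₁² + h₂²) for all h ∈ ℝ³; moreover Q is Hadamard superdifferentiable at x with superdifferential {(−2|x₃|v₁, −2|x₃|v₂, 4x₃) : v ∈ ℝ², v₁² + v₂² ≤ 1}, i.e. Q'(x; h) equals the minimum of vᵀh over this set. -/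
/-!
Because `x₁ = x₂ = 0`, `σ` is positively homogeneous along rays from `x`: `σ(x + t y) = t σ(y)`
for `t ≥ 0`. Hence for `t > 0` the difference quotient of `Q` at `x` is a jointly continuous
function of `(t, y)`, and the Hadamard derivative is its value at `t = 0`. The superdifferential
formula is Cauchy–Schwarz in the plane: `v₁h₁ + v₂h₂` attains its maximum `√(h₁² + h₂²)` over the
unit disc, and the inner product with `(−2|x₃|v₁, −2|x₃|v₂, 4x₃)` is an antitone function of it.
-/

open Filter Topology RealInnerProductSpace

/-- The Hadamard directional derivative: `d` is the Hadamard directional derivative of `f`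
at `x` in direction `h` if `(f (x + α h') - f x) / α → d` as `(α, h') → (0⁺, h)`. -/
def HasHadamardDerivAt {E : Type*} [NormedAddCommGroup E] [NormedSpace ℝ E]
    (f : E → ℝ) (x h : E) (d : ℝ) : Prop :=
  Filter.Tendsto (fun p : ℝ × E => (f (x + p.1 • p.2) - f x) / p.1)
    ((𝓝[>] (0 : ℝ)) ×ˢ 𝓝 h) (𝓝 d)

/-- `σ x = √(x₁² + x₂²)`. -/
noncomputable def sigmaBI (x : EuclideanSpace ℝ (Fin 3)) : ℝ :=
  Real.sqrt (x 0 ^ 2 + x 1 ^ 2)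

/-- The goal function `Q(x) = (σ(x) − |x₃|)² + x₃²` for the Brockett integrator. -/
noncomputable def QBI (x : EuclideanSpace ℝ (Fin 3)) : ℝ :=
  (sigmaBI x - |x 2|) ^ 2 + (x 2) ^ 2

lemma HasHadamardDerivAt.of_continuousAt {E : Type*} [NormedAddCommGroup E]
    [NormedSpace ℝ E] {f : E → ℝ} {x h : E} (F : ℝ × E → ℝ) (hF : ContinuousAt F (0, h))
    (hquot : ∀ t > 0, ∀ y, (f (x + t • y) - f x) / t = F (t, y)) :
    HasHadamardDerivAt f x h (F (0, h)) := by
  have hle : (𝓝[>] (0 : ℝ)) ×ˢ 𝓝 h ≤ 𝓝 (0, h) := by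
    rw [nhds_prod_eq]
    exact prod_mono nhdsWithin_le_nhds le_rfl
  refine (hF.tendsto.mono_left hle).congr' ?_
  filter_upwards [prod_mem_prod self_mem_nhdsWithin univ_mem] with p hp
  exact (hquot p.1 hp.1 p.2).symm

lemma isGreatest_dot_unitDisc (a b : ℝ) :
    IsGreatest {r : ℝ | ∃ v₁ v₂ : ℝ, v₁ ^ 2 + v₂ ^ 2 ≤ 1 ∧ r = v₁ * a + v₂ * b}
      (√(a ^ 2 + b ^ 2)) := by
  set s := √(a ^ 2 + b ^ 2)
  have hs2 : s ^ 2 = a ^ 2 + b ^ 2 := Real.sq_sqrt (by positivity)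
  have hs0 : 0 ≤ s := Real.sqrt_nonneg _
  refine ⟨?_, ?_⟩
  · rcases hs0.eq_or_lt with hs | hs
    · exact ⟨0, 0, by norm_num, by rw [zero_mul, zero_mul, add_zero]; exact hs.symm⟩
    · refine ⟨a / s, b / s, ?_, ?_⟩
      · rw [div_pow, div_pow, ← add_div, ← hs2, div_self (by positivity)]
      · rw [div_mul_eq_mul_div, div_mul_eq_mul_div, ← add_div, eq_div_iff hs.ne']
        linear_combination hs2
  · rintro r ⟨v₁, v₂, hv, rfl⟩
    nlinarith [sq_nonneg (v₁ * b - v₂ * a), sq_nonneg (v₁ * a + v₂ * b - s)]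

lemma inner_toLp_vecCons (a c v₁ v₂ : ℝ) (h : EuclideanSpace ℝ (Fin 3)) :
    ⟪(WithLp.equiv 2 (Fin 3 → ℝ)).symm ![a * v₁, a * v₂, c], h⟫ =
      c * h 2 + a * (v₁ * h 0 + v₂ * h 1) := by
  simp [PiLp.inner_apply, Fin.sum_univ_three]
  ring

lemma isLeast_inner_unitDisc {a : ℝ} (ha : a ≤ 0) (c : ℝ) (h : EuclideanSpace ℝ (Fin 3)) :
    IsLeast {r : ℝ | ∃ v₁ v₂ : ℝ, v₁ ^ 2 + v₂ ^ 2 ≤ 1 ∧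
        r = ⟪(WithLp.equiv 2 (Fin 3 → ℝ)).symm ![a * v₁, a * v₂, c], h⟫}
      (c * h 2 + a * √(h 0 ^ 2 + h 1 ^ 2)) := by
  have hanti : Antitone fun r => c * h 2 + a * r := fun r s hrs => by
    dsimp only
    nlinarith
  have hset : {r : ℝ | ∃ v₁ v₂ : ℝ, v₁ ^ 2 + v₂ ^ 2 ≤ 1 ∧
        r = ⟪(WithLp.equiv 2 (Fin 3 → ℝ)).symm ![a * v₁, a * v₂, c], h⟫} =
      (fun r => c * h 2 + a * r) ''
        {r : ℝ | ∃ v₁ v₂ : ℝ, v₁ ^ 2 + v₂ ^ 2 ≤ 1 ∧ r = v₁ * h 0 + v₂ * h 1} := by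
    ext r
    constructor
    · rintro ⟨v₁, v₂, hv, rfl⟩
      exact ⟨_, ⟨v₁, v₂, hv, rfl⟩, (inner_toLp_vecCons a c v₁ v₂ h).symm⟩
    · rintro ⟨_, ⟨v₁, v₂, hv, rfl⟩, rfl⟩
      exact ⟨v₁, v₂, hv, (inner_toLp_vecCons a c v₁ v₂ h).symm⟩
  rw [hset]
  exact hanti.map_isGreatest (isGreatest_dot_unitDisc (h 0) (h 1))

lemma continuous_sigmaBI : Continuous sigmaBI := by
  unfold sigmaBI
  fun_prop

lemma sigmaBI_eq_zero_iff {x : EuclideanSpace ℝ (Fin 3)} :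
    sigmaBI x = 0 ↔ x 0 = 0 ∧ x 1 = 0 := by
  rw [sigmaBI, Real.sqrt_eq_zero (by positivity)]
  constructor
  · intro h
    constructor <;> nlinarith [sq_nonneg (x 0), sq_nonneg (x 1)]
  · rintro ⟨h0, h1⟩
    simp [h0, h1]

lemma sigmaBI_add_smul {x : EuclideanSpace ℝ (Fin 3)} (hσ : sigmaBI x = 0) {t : ℝ} (ht : 0 ≤ t)
    (y : EuclideanSpace ℝ (Fin 3)) : sigmaBI (x + t • y) = t * sigmaBI y := by
  obtain ⟨hx0, hx1⟩ := sigmaBI_eq_zero_iff.mp hσ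
  simp only [sigmaBI, PiLp.add_apply, PiLp.smul_apply, smul_eq_mul, hx0, hx1, zero_add]
  rw [show (t * y 0) ^ 2 + (t * y 1) ^ 2 = t ^ 2 * (y 0 ^ 2 + y 1 ^ 2) by ring,
    Real.sqrt_mul' _ (by positivity), Real.sqrt_sq ht]

lemma QBI_sub_div_eq {x : EuclideanSpace ℝ (Fin 3)} (hσ : sigmaBI x = 0) {t : ℝ} (ht : 0 < t)
    (y : EuclideanSpace ℝ (Fin 3)) :
    (QBI (x + t • y) - QBI x) / t =
      t * sigmaBI y ^ 2 - 2 * sigmaBI y * |x 2 + t * y 2| + 4 * x 2 * y 2 + 2 * t * y 2 ^ 2 := by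
  rw [QBI, QBI, sigmaBI_add_smul hσ ht.le, hσ, div_eq_iff ht.ne']
  simp only [PiLp.add_apply, PiLp.smul_apply, smul_eq_mul]
  linear_combination sq_abs (x 2 + t * y 2) - sq_abs (x 2)

lemma hasHadamardDerivAt_QBI {x : EuclideanSpace ℝ (Fin 3)} (hσ : sigmaBI x = 0)
    (h : EuclideanSpace ℝ (Fin 3)) :
    HasHadamardDerivAt QBI x h (4 * x 2 * h 2 - 2 * |x 2| * sigmaBI h) := by
  have hF : Continuous fun p : ℝ × EuclideanSpace ℝ (Fin 3) =>
      p.1 * sigmaBI p.2 ^ 2 - 2 * sigmaBI p.2 * |x 2 + p.1 * p.2 2| + 4 * x 2 * p.2 2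
        + 2 * p.1 * p.2 2 ^ 2 := by
    have := continuous_sigmaBI
    fun_prop
  convert HasHadamardDerivAt.of_continuousAt _ hF.continuousAt
    (fun t ht y => QBI_sub_div_eq hσ ht y) using 1
  simp only [zero_mul, add_zero, mul_zero]
  ring

/-- At every point with `σ(x) = 0` (i.e. `x₁ = x₂ = 0`), the goal function `Q` is Hadamard
directionally differentiable with `Q'(x; h) = 4x₃h₃ − 2|x₃|√(h₁² + h₂²)`, and it is
Hadamard superdifferentiable with superdifferential
`{(−2|x₃|v₁, −2|x₃|v₂, 4x₃) : v₁² + v₂² ≤ 1}`: its directional derivative in direction `h`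
is the minimum of `⟪v, h⟫` over this set. -/
theorem QBI_superdifferentiable_on_sigma_eq_zero (x : EuclideanSpace ℝ (Fin 3))
    (hσ : sigmaBI x = 0) :
    ∀ h : EuclideanSpace ℝ (Fin 3),
      HasHadamardDerivAt QBI x h
        (4 * x 2 * h 2 - 2 * |x 2| * Real.sqrt (h 0 ^ 2 + h 1 ^ 2)) ∧
      IsLeast {r : ℝ | ∃ v₁ v₂ : ℝ, v₁ ^ 2 + v₂ ^ 2 ≤ 1 ∧
          r = ⟪(WithLp.equiv 2 (Fin 3 → ℝ)).symm
                ![-2 * |x 2| * v₁, -2 * |x 2| * v₂, 4 * x 2], h⟫}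
        (4 * x 2 * h 2 - 2 * |x 2| * Real.sqrt (h 0 ^ 2 + h 1 ^ 2)) := by
  intro h
  refine ⟨hasHadamardDerivAt_QBI hσ h, ?_⟩
  have ha : -2 * |x 2| ≤ 0 := by linarith [abs_nonneg (x 2)]
  convert isLeast_inner_unitDisc ha (4 * x 2) h using 1
  ring
end

section
/- For every x ∈ ℝ³ with σ(x) ≠ 0 and x₃ ≠ 0, the vector g(x) = (g₁(x), g₂(x)) is nonzero, i.e. (g₁(x), g₂(x)) ≠ (0, 0). -/
/-- First component of the speed-gradient vector `g(x)` for the Brockett integrator: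
`g₁(x) = 2x₁ − 4x₂x₃ − 2|x₃|x₁/σ(x) + 2 sgn(x₃) x₂ σ(x)`. -/
noncomputable def g1BI (x : EuclideanSpace ℝ (Fin 3)) : ℝ :=
  2 * x 0 - 4 * x 1 * x 2 - 2 * |x 2| * x 0 / sigmaBI x + 2 * Real.sign (x 2) * x 1 * sigmaBI x

/-- Second component of the speed-gradient vector `g(x)` for the Brockett integrator:
`g₂(x) = 2x₂ + 4x₁x₃ − 2|x₃|x₂/σ(x) − 2 sgn(x₃) x₁ σ(x)`. -/
noncomputable def g2BI (x : EuclideanSpace ℝ (Fin 3)) : ℝ :=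
  2 * x 1 + 4 * x 0 * x 2 - 2 * |x 2| * x 1 / sigmaBI x - 2 * Real.sign (x 2) * x 0 * sigmaBI x


/-! Writing `u = (x₁, x₂)`, one has `g(x) = α u + β J u` with `J` the rotation by `-π/2`,
`α = 2 (1 - |x₃|/σ)` and `β = 2 sgn(x₃) σ - 4 x₃`. Since `|u| = σ > 0` and `u ⟂ J u`, `g(x) = 0`
forces `α = β = 0`, i.e. `σ = |x₃|` and `sgn(x₃) σ = 2 x₃`; together these give `x₃ = 2 x₃`. -/

theorem Real.sign_mul_abs (r : ℝ) : Real.sign r * |r| = r := by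
  rcases lt_trichotomy r 0 with hr | rfl | hr
  · rw [Real.sign_of_neg hr, abs_of_neg hr]; ring
  · simp
  · rw [Real.sign_of_pos hr, abs_of_pos hr]; ring

theorem eq_zero_and_eq_zero_of_add_rotate_eq_zero {α β p q : ℝ}
    (h₁ : α * p + β * q = 0) (h₂ : α * q - β * p = 0) (hpq : p ^ 2 + q ^ 2 ≠ 0) :
    α = 0 ∧ β = 0 := by
  have hnorm : (α * α + β * β) * (p ^ 2 + q ^ 2) = 0 := by
    linear_combination (α * p + β * q) * h₁ + (α * q - β * p) * h₂
  exact mul_self_add_mul_self_eq_zero.mp ((mul_eq_zero.mp hnorm).resolve_right hpq)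

theorem sigmaBI_sq (x : EuclideanSpace ℝ (Fin 3)) : sigmaBI x ^ 2 = x 0 ^ 2 + x 1 ^ 2 :=
  Real.sq_sqrt (by positivity)

theorem g1BI_eq (x : EuclideanSpace ℝ (Fin 3)) :
    g1BI x = 2 * (1 - |x 2| / sigmaBI x) * x 0
      + (2 * Real.sign (x 2) * sigmaBI x - 4 * x 2) * x 1 := by
  unfold g1BI; ring

theorem g2BI_eq (x : EuclideanSpace ℝ (Fin 3)) :
    g2BI x = 2 * (1 - |x 2| / sigmaBI x) * x 1
      - (2 * Real.sign (x 2) * sigmaBI x - 4 * x 2) * x 0 := by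
  unfold g2BI; ring

/-- For every `x` with `σ(x) ≠ 0` and `x₃ ≠ 0`, the vector `g(x) = (g₁(x), g₂(x))` is
nonzero. -/
theorem gBI_ne_zero (x : EuclideanSpace ℝ (Fin 3))
    (hσ : sigmaBI x ≠ 0) (hx3 : x 2 ≠ 0) :
    (g1BI x, g2BI x) ≠ ((0 : ℝ), (0 : ℝ)) := by
  intro h
  obtain ⟨hα, hβ⟩ := eq_zero_and_eq_zero_of_add_rotate_eq_zero
    (g1BI_eq x ▸ congrArg Prod.fst h) (g2BI_eq x ▸ congrArg Prod.snd h)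
    (sigmaBI_sq x ▸ pow_ne_zero 2 hσ)
  have habs : |x 2| = sigmaBI x := by
    field_simp at hα
    linarith
  rw [← habs, mul_assoc, Real.sign_mul_abs] at hβ
  exact hx3 (by linarith)
end
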